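/- arXiv:1010.6207 — 2 statements merged into one kernel-verified Lean document; each statement's English description precedes it below -/
import Mathlib

section
/- Let Ψ be an Orlicz function satisfying the Δ^2 condition: there exist α > 1 and x_0 > 0 with (Ψ(x))^2 ≤ Ψ(αx) for x ≥ x_0. Then Ψ satisfies: for every A > 0 there exist x_A > 0 and B ≥ A such that Ψ(A·Ψ^{-1}(x^2)) ≤ (Ψ(B·Ψ^{-1}(x)))^2 for all x ≥ x_A. -/
/-!
Put `u = Ψ⁻¹(x)` and `v = Ψ⁻¹(x²)`. Once `x > Ψ(x₀)` we have `u ≥ x₀`, so the `Δ²` condition gives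
`Ψ(v) = x² = Ψ(u)² ≤ Ψ(αu)`. A convex function vanishing only at `0` is strictly increasing on
`[0, ∞)`, hence `v ≤ αu`, and with `B = α · max A 1`,
`Ψ(A v) ≤ Ψ(B u)`, where `Ψ(B u) ≥ Ψ(u) = x ≥ 1` is at most its own square.
-/

/-- An Orlicz function: convex, non-decreasing, vanishing only at `0`, tending to `∞`. -/
def OrliczFun (Ψ : ℝ → ℝ) : Prop :=
  ConvexOn ℝ (Set.Ici 0) Ψ ∧ MonotoneOn Ψ (Set.Ici 0) ∧ Ψ 0 = 0 ∧
    (∀ x > (0:ℝ), 0 < Ψ x) ∧ Filter.Tendsto Ψ Filter.atTop Filter.atTop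

open Set

theorem ConvexOn.map_mul_le_mul_of_map_zero {f : ℝ → ℝ} (hf : ConvexOn ℝ (Ici 0) f)
    (h0 : f 0 = 0) {t x : ℝ} (ht0 : 0 ≤ t) (ht1 : t ≤ 1) (hx : 0 ≤ x) :
    f (t * x) ≤ t * f x := by
  have := hf.2 self_mem_Ici hx (sub_nonneg.2 ht1) ht0 (sub_add_cancel 1 t)
  simpa [h0] using this

theorem ConvexOn.strictMonoOn_of_map_zero {f : ℝ → ℝ} (hf : ConvexOn ℝ (Ici 0) f)
    (h0 : f 0 = 0) (hpos : ∀ x > (0 : ℝ), 0 < f x) : StrictMonoOn f (Ici 0) := by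
  intro a ha b _ hab
  have hb : 0 < b := lt_of_le_of_lt ha hab
  rcases (mem_Ici.1 ha).eq_or_lt with rfl | ha
  · rw [h0]
    exact hpos b hb
  calc f a = f (a / b * b) := by rw [div_mul_cancel₀ a hb.ne']
    _ ≤ a / b * f b :=
      hf.map_mul_le_mul_of_map_zero h0 (div_nonneg ha.le hb.le) ((div_le_one hb).2 hab.le) hb.le
    _ < f b := mul_lt_of_lt_one_left (hpos b hb) ((div_lt_one hb).2 hab)

namespace OrliczFun

variable {Ψ : ℝ → ℝ}

theorem nonneg (hΨ : OrliczFun Ψ) {x : ℝ} (hx : 0 ≤ x) : 0 ≤ Ψ x := by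
  simpa [hΨ.2.2.1] using hΨ.2.1 self_mem_Ici hx hx

theorem strictMonoOn (hΨ : OrliczFun Ψ) : StrictMonoOn Ψ (Ici 0) :=
  hΨ.1.strictMonoOn_of_map_zero hΨ.2.2.1 hΨ.2.2.2.1

theorem inv_sq_le_mul_inv (hΨ : OrliczFun Ψ) {Ψinv : ℝ → ℝ}
    (hinv : ∀ t ≥ (0 : ℝ), 0 ≤ Ψinv t ∧ Ψ (Ψinv t) = t) {α x₀ : ℝ} (hα : 0 ≤ α) (hx₀ : 0 ≤ x₀)
    (hΔsq : ∀ x ≥ x₀, (Ψ x) ^ 2 ≤ Ψ (α * x)) {x : ℝ} (hx : Ψ x₀ < x) :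
    Ψinv (x ^ 2) ≤ α * Ψinv x := by
  obtain ⟨hu0, hu⟩ := hinv x ((hΨ.nonneg hx₀).trans hx.le)
  obtain ⟨hv0, hv⟩ := hinv (x ^ 2) (sq_nonneg x)
  have hx₀u : x₀ ≤ Ψinv x := ((hΨ.strictMonoOn.lt_iff_lt hx₀ hu0).1 (by rwa [hu])).le
  refine (hΨ.strictMonoOn.le_iff_le hv0 (mul_nonneg hα hu0)).1 ?_
  calc Ψ (Ψinv (x ^ 2)) = (Ψ (Ψinv x)) ^ 2 := by rw [hv, hu]
    _ ≤ Ψ (α * Ψinv x) := hΔsq _ hx₀u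

end OrliczFun

theorem stmt_13 (Ψ Ψinv : ℝ → ℝ) (hΨ : OrliczFun Ψ)
    (hinv : ∀ t ≥ (0:ℝ), 0 ≤ Ψinv t ∧ Ψ (Ψinv t) = t)
    (α x₀ : ℝ) (hα : 1 < α) (hx₀ : 0 < x₀)
    (hΔsq : ∀ x ≥ x₀, (Ψ x) ^ 2 ≤ Ψ (α * x)) :
    ∀ A > (0:ℝ), ∃ xA > (0:ℝ), ∃ B ≥ A,
      ∀ x ≥ xA, Ψ (A * Ψinv (x ^ 2)) ≤ (Ψ (B * Ψinv x)) ^ 2 := by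
  intro A hA
  have hΨx₀ : 0 < Ψ x₀ := hΨ.2.2.2.1 x₀ hx₀
  have hB : 1 ≤ α * max A 1 := one_le_mul_of_one_le_of_one_le hα.le (le_max_right A 1)
  refine ⟨Ψ x₀ + 1, by linarith, α * max A 1,
    (le_max_left A 1).trans (le_mul_of_one_le_left (by positivity) hα.le), fun x hx => ?_⟩
  obtain ⟨hu0, hu⟩ := hinv x (by linarith)
  have hv := hΨ.inv_sq_le_mul_inv hinv (by linarith) hx₀.le hΔsq (x := x) (by linarith)
  have hBu : 0 ≤ α * max A 1 * Ψinv x := by positivity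
  have hAv : Ψ (A * Ψinv (x ^ 2)) ≤ Ψ (α * max A 1 * Ψinv x) := by
    refine hΨ.2.1 (mul_nonneg hA.le (hinv _ (sq_nonneg x)).1) hBu ?_
    calc A * Ψinv (x ^ 2) ≤ A * (α * Ψinv x) := by gcongr
      _ = α * A * Ψinv x := by ring
      _ ≤ α * max A 1 * Ψinv x := by have := hα.le; gcongr; exact le_max_left A 1
  have hxB : x ≤ Ψ (α * max A 1 * Ψinv x) :=
    calc x = Ψ (Ψinv x) := hu.symm
      _ ≤ Ψ (α * max A 1 * Ψinv x) := hΨ.2.1 hu0 hBu (le_mul_of_one_le_left hu0 hB)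
  exact hAv.trans (le_self_pow₀ (by linarith) two_ne_zero)
end

section
/- Let Ψ be an Orlicz function satisfying the Δ_2 condition: there exist C > 0 and x_0 > 0 with Ψ(2x) ≤ C·Ψ(x) for x ≥ x_0. Then for every A > 0 there exist x_A > 0 and B ≥ A such that Ψ(A·Ψ^{-1}(x^2)) ≤ (Ψ(B·Ψ^{-1}(x)))^2 for all x ≥ x_A. -/
/-!
Write `u = Ψ⁻¹(x²)` and `v = Ψ⁻¹(x)`. Once `x` is large, `u` lies in the range `u ≥ x₀` where
`Δ₂` applies, so with `A ≤ 2ᵏ` we get `Ψ(A u) ≤ Ψ(2ᵏ u) ≤ Cᵏ Ψ(u) = Cᵏ x²`. On the other side,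
convexity and `Ψ(0) = 0` give `Ψ(B v) ≥ B Ψ(v) = B x` for `B ≥ 1`, so `Ψ(B v)² ≥ B² x²`,
and any `B ≥ max(A, Cᵏ)` works.
-/

open Set

lemma ConvexOn.mul_apply_le_apply_mul {Ψ : ℝ → ℝ} (hconv : ConvexOn ℝ (Ici 0) Ψ) (h0 : Ψ 0 = 0)
    {B v : ℝ} (hB : 1 ≤ B) (hv : 0 ≤ v) : B * Ψ v ≤ Ψ (B * v) := by
  have hB0 : 0 < B := by linarith
  have hw : 0 ≤ 1 - B⁻¹ := sub_nonneg.mpr (inv_le_one_of_one_le₀ hB)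
  have key := hconv.2 (mem_Ici.mpr le_rfl) (mem_Ici.mpr (by positivity : 0 ≤ B * v)) hw
    (inv_nonneg.mpr hB0.le) (sub_add_cancel 1 B⁻¹)
  simp only [smul_eq_mul, mul_zero, zero_add, h0, inv_mul_cancel_left₀ hB0.ne'] at key
  rwa [← le_inv_mul_iff₀ hB0]

lemma MonotoneOn.apply_nonneg {Ψ : ℝ → ℝ} (hmono : MonotoneOn Ψ (Ici 0)) (h0 : Ψ 0 = 0)
    {t : ℝ} (ht : 0 ≤ t) : 0 ≤ Ψ t :=
  h0 ▸ hmono (mem_Ici.mpr le_rfl) (mem_Ici.mpr ht) ht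

/-- Replacing `C` by `max C 1 ≥ 0` makes the induction work without a sign condition on `C`. -/
lemma apply_two_pow_mul_le_of_delta2 {Ψ : ℝ → ℝ} (hmono : MonotoneOn Ψ (Ici 0)) (h0 : Ψ 0 = 0)
    {C x₀ : ℝ} (hΔ2 : ∀ x ≥ x₀, Ψ (2 * x) ≤ C * Ψ x) {u : ℝ} (hu : 0 ≤ u) (hux₀ : x₀ ≤ u)
    (k : ℕ) : Ψ (2 ^ k * u) ≤ max C 1 ^ k * Ψ u := by
  induction k with
  | zero => simp
  | succ k ih =>
    have hku : u ≤ 2 ^ k * u := le_mul_of_one_le_left hu (one_le_pow₀ one_le_two)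
    calc Ψ (2 ^ (k + 1) * u) = Ψ (2 * (2 ^ k * u)) := by ring_nf
      _ ≤ C * Ψ (2 ^ k * u) := hΔ2 _ (hux₀.trans hku)
      _ ≤ max C 1 * (max C 1 ^ k * Ψ u) :=
        mul_le_mul (le_max_left _ _) ih (hmono.apply_nonneg h0 (hu.trans hku))
          (zero_le_one.trans (le_max_right _ _))
      _ = max C 1 ^ (k + 1) * Ψ u := by ring

theorem stmt_14_general (Ψ Ψinv : ℝ → ℝ) (hΨ : OrliczFun Ψ)
    (hinv : ∀ t ≥ (0:ℝ), 0 ≤ Ψinv t ∧ Ψ (Ψinv t) = t)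
    (C x₀ : ℝ)
    (hΔ2 : ∀ x ≥ x₀, Ψ (2 * x) ≤ C * Ψ x) :
    ∀ A > (0:ℝ), ∃ xA > (0:ℝ), ∃ B ≥ A,
      ∀ x ≥ xA, Ψ (A * Ψinv (x ^ 2)) ≤ (Ψ (B * Ψinv x)) ^ 2 := by
  obtain ⟨hconv, hmono, h0, -, -⟩ := hΨ
  intro A hA
  obtain ⟨k, hk⟩ := pow_unbounded_of_one_lt A one_lt_two
  set x₁ := max x₀ 0
  have hCk : 1 ≤ max C 1 ^ k := one_le_pow₀ (le_max_right _ _)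
  refine ⟨max 1 (Ψ x₁ + 1), by positivity, max A (max C 1 ^ k), le_max_left _ _, fun x hx => ?_⟩
  set B := max A (max C 1 ^ k)
  have hx1 : 1 ≤ x := (le_max_left _ _).trans hx
  obtain ⟨hu0, hu⟩ := hinv (x ^ 2) (sq_nonneg x)
  obtain ⟨hv0, hv⟩ := hinv x (by linarith)
  have hux₁ : x₁ ≤ Ψinv (x ^ 2) := by
    refine le_of_lt (hmono.reflect_lt (mem_Ici.mpr (le_max_right _ _)) (mem_Ici.mpr hu0) ?_)
    have : Ψ x₁ + 1 ≤ x := (le_max_right _ _).trans hx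
    nlinarith -- `Ψ x₁ < x ≤ x² = Ψ u`
  have hleft : Ψ (A * Ψinv (x ^ 2)) ≤ max C 1 ^ k * x ^ 2 :=
    calc Ψ (A * Ψinv (x ^ 2)) ≤ Ψ (2 ^ k * Ψinv (x ^ 2)) :=
          hmono (mem_Ici.mpr (by positivity)) (mem_Ici.mpr (by positivity))
            (mul_le_mul_of_nonneg_right hk.le hu0)
      _ ≤ max C 1 ^ k * x ^ 2 :=
          (apply_two_pow_mul_le_of_delta2 hmono h0 hΔ2 hu0 ((le_max_left _ _).trans hux₁) k).trans_eq
            (by rw [hu])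
  have hB : 1 ≤ B := hCk.trans (le_max_right _ _)
  have hright : B * x ≤ Ψ (B * Ψinv x) := by
    simpa only [hv] using hconv.mul_apply_le_apply_mul h0 hB hv0
  calc Ψ (A * Ψinv (x ^ 2)) ≤ max C 1 ^ k * x ^ 2 := hleft
    _ ≤ B ^ 2 * x ^ 2 := by
        gcongr
        exact (le_max_right _ _).trans (le_self_pow₀ hB two_ne_zero)
    _ = (B * x) ^ 2 := by ring
    _ ≤ Ψ (B * Ψinv x) ^ 2 := pow_le_pow_left₀ (by positivity) hright 2

theorem stmt_14 (Ψ Ψinv : ℝ → ℝ) (hΨ : OrliczFun Ψ)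
    (hinv : ∀ t ≥ (0:ℝ), 0 ≤ Ψinv t ∧ Ψ (Ψinv t) = t)
    (C x₀ : ℝ) (hC : 0 < C) (hx₀ : 0 < x₀)
    (hΔ2 : ∀ x ≥ x₀, Ψ (2 * x) ≤ C * Ψ x) :
    ∀ A > (0:ℝ), ∃ xA > (0:ℝ), ∃ B ≥ A,
      ∀ x ≥ xA, Ψ (A * Ψinv (x ^ 2)) ≤ (Ψ (B * Ψinv x)) ^ 2 :=
  stmt_14_general Ψ Ψinv hΨ hinv C x₀ hΔ2
end
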